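/- Let α be a countable ordinal, K a Polish space, and φ, φ₁, φ₂, … real-valued functions on K such that the partial sums Σ_{j=1}^n φ_j converge to φ uniformly on K, and Σ_j ‖osc_α φ_j‖_∞ < ∞. Then ‖osc_α(φ − Σ_{j=1}^n φ_j)‖_∞ → 0 as n → ∞; in particular ‖osc_α φ‖_∞ ≤ Σ_{j=1}^∞ ‖osc_α φ_j‖_∞ < ∞. -/

import Mathlib

open Filter Topology Set

def IsFsigma {X : Type*} [TopologicalSpace X] (s : Set X) : Prop :=
  ∃ F : ℕ → Set X, (∀ n, IsClosed (F n)) ∧ s = ⋃ n, F n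

def IsAmbiguous {X : Type*} [TopologicalSpace X] (s : Set X) : Prop :=
  IsFsigma s ∧ IsGδ s

def PointwiseStabilizing {X : Type*} [TopologicalSpace X] (F : X → ℝ) : Prop :=
  ∃ f : ℕ → X → ℝ, (∀ n, Continuous (f n)) ∧ ∀ k, ∃ m, ∀ n ≥ m, f n k = F k

def BaireOne {X : Type*} [TopologicalSpace X] (F : X → ℝ) : Prop :=
  ∃ f : ℕ → X → ℝ, (∀ n, Continuous (f n)) ∧ ∀ x, Tendsto (fun n => f n x) atTop (𝓝 (F x))

def DSC {X : Type*} [TopologicalSpace X] (f : X → ℝ) : Prop :=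
  ∃ g : ℕ → X → ℝ, (∀ n, Continuous (g n)) ∧ (∀ x, Tendsto (fun n => g n x) atTop (𝓝 (f x)))
    ∧ ∀ x, Summable fun n => |g (n + 1) x - g n x|

def DBSC {X : Type*} [TopologicalSpace X] (f : X → ℝ) : Prop :=
  ∃ (φ : ℕ → X → ℝ) (C : ℝ), (∀ n, Continuous (φ n)) ∧ (∀ x, HasSum (fun n => φ n x) (f x))
    ∧ ∀ x, ∑' n, |φ n x| ≤ C
open scoped ENNReal

noncomputable def uscEnv {X : Type*} [TopologicalSpace X] (g : X → ℝ≥0∞) : X → ℝ≥0∞ :=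
  fun x => Filter.limsup g (𝓝 x)

noncomputable def transOsc {X : Type*} [TopologicalSpace X] (f : X → ℝ) (β : Ordinal.{0}) :
    X → ℝ≥0∞ :=
  Ordinal.limitRecOn β (fun _ => 0)
    (fun _ O => uscEnv fun x => Filter.limsup (fun y => ENNReal.ofReal |f y - f x| + O y) (𝓝 x))
    (fun β _ ih => uscEnv fun x => ⨆ (α : Ordinal) (h : α < β), ih α h x)

def StrongContinuityPoint {X : Type*} [TopologicalSpace X] (g : X → ℝ) (x : X) : Prop :=
  ∀ α < Cardinal.ord.{0} (Cardinal.aleph 1), transOsc g α x = 0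

section helpers
variable {X : Type*} [TopologicalSpace X]

lemma myLimsupAddLe {ι : Type*} (l : Filter ι) (u v : ι → ℝ≥0∞) :
    Filter.limsup (fun i => u i + v i) l ≤ Filter.limsup u l + Filter.limsup v l := by
  rcases eq_top_or_lt_top (Filter.limsup u l) with h | hu
  · simp [h]
  rcases eq_top_or_lt_top (Filter.limsup v l) with h | hv
  · simp [h]
  refine ENNReal.le_of_forall_pos_le_add fun ε hε _ => ?_
  have hε2 : (0:ℝ≥0∞) < (ε:ℝ≥0∞)/2 := ENNReal.half_pos (by exact_mod_cast hε.ne')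
  have h1 : ∀ᶠ i in l, u i < Filter.limsup u l + (ε:ℝ≥0∞)/2 :=
    Filter.eventually_lt_of_limsup_lt (ENNReal.lt_add_right hu.ne hε2.ne')
  have h2 : ∀ᶠ i in l, v i < Filter.limsup v l + (ε:ℝ≥0∞)/2 :=
    Filter.eventually_lt_of_limsup_lt (ENNReal.lt_add_right hv.ne hε2.ne')
  have : Filter.limsup (fun i => u i + v i) l ≤
      (Filter.limsup u l + (ε:ℝ≥0∞)/2) + (Filter.limsup v l + (ε:ℝ≥0∞)/2) := by
    refine Filter.limsup_le_of_le (by isBoundedDefault) ?_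
    filter_upwards [h1, h2] with i hi1 hi2
    exact add_le_add hi1.le hi2.le
  calc Filter.limsup (fun i => u i + v i) l
      ≤ (Filter.limsup u l + (ε:ℝ≥0∞)/2) + (Filter.limsup v l + (ε:ℝ≥0∞)/2) := this
    _ = Filter.limsup u l + Filter.limsup v l + ((ε:ℝ≥0∞)/2 + (ε:ℝ≥0∞)/2) := by ring
    _ = Filter.limsup u l + Filter.limsup v l + ε := by rw [ENNReal.add_halves]

lemma myLimsupSumLe {ι κ : Type*} (l : Filter ι) (s : Finset κ) (u : κ → ι → ℝ≥0∞) :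
    Filter.limsup (fun i => ∑ j ∈ s, u j i) l ≤ ∑ j ∈ s, Filter.limsup (u j) l := by
  classical
  induction s using Finset.cons_induction with
  | empty =>
    simp only [Finset.sum_empty]
    exact Filter.limsup_le_of_le (by isBoundedDefault) (Filter.Eventually.of_forall fun _ => le_rfl)
  | cons a s ha IH =>
    simp only [Finset.sum_cons]
    exact (myLimsupAddLe l _ _).trans (add_le_add le_rfl IH)

lemma le_uscEnv (g : X → ℝ≥0∞) (x : X) : g x ≤ uscEnv g x := by
  refine Filter.le_limsup_of_frequently_le ?_
  intro h
  exact (mem_of_mem_nhds h) le_rfl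

lemma uscEnv_le_const {g : X → ℝ≥0∞} {c : ℝ≥0∞} (h : ∀ y, g y ≤ c) (x : X) : uscEnv g x ≤ c :=
  Filter.limsup_le_of_le (by isBoundedDefault) (Filter.Eventually.of_forall h)

lemma uscEnv_mono {g h : X → ℝ≥0∞} (hgh : ∀ y, g y ≤ h y) (x : X) : uscEnv g x ≤ uscEnv h x :=
  Filter.limsup_le_limsup (Filter.Eventually.of_forall hgh)

lemma transOsc_zero (f : X → ℝ) : transOsc f 0 = fun _ => 0 :=
  Ordinal.limitRecOn_zero _ _ _

lemma transOsc_succ (f : X → ℝ) (β : Ordinal.{0}) :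
    transOsc f (Order.succ β) =
      uscEnv (fun x => Filter.limsup
        (fun y => ENNReal.ofReal |f y - f x| + transOsc f β y) (𝓝 x)) :=
  Ordinal.limitRecOn_succ _ _ _ _

lemma transOsc_limit (f : X → ℝ) {β : Ordinal.{0}} (hβ : Order.IsSuccLimit β) :
    transOsc f β = uscEnv (fun x => ⨆ (γ : Ordinal) (_ : γ < β), transOsc f γ x) :=
  Ordinal.limitRecOn_limit _ _ _ _ hβ
end helpers

section osc
variable {X : Type*} [TopologicalSpace X]

lemma transOsc_mono (f : X → ℝ) : ∀ β : Ordinal.{0}, ∀ α ≤ β, ∀ x,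
    transOsc f α x ≤ transOsc f β x := by
  intro β
  induction β using Ordinal.induction with
  | h β IH =>
    rcases Ordinal.zero_or_succ_or_isSuccLimit β with rfl | ⟨γ, rfl⟩ | hlim
    · intro α hα x
      rw [nonpos_iff_eq_zero] at hα
      subst hα; exact le_rfl
    · intro α hα x
      rcases eq_or_lt_of_le hα with rfl | hlt
      · exact le_rfl
      have hαγ : α ≤ γ := Order.lt_succ_iff.mp hlt
      refine (IH γ (Order.lt_succ γ) α hαγ x).trans ?_
      rw [transOsc_succ]
      refine le_trans ?_ (le_uscEnv _ x)
      refine le_trans (le_uscEnv (transOsc f γ) x) ?_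
      exact Filter.limsup_le_limsup (Filter.Eventually.of_forall fun y => le_add_self)
    · intro α hα x
      rcases eq_or_lt_of_le hα with rfl | hlt
      · exact le_rfl
      rw [transOsc_limit f hlim]
      refine le_trans ?_ (le_uscEnv _ x)
      exact le_iSup₂ (f := fun γ (_ : γ < β) => transOsc f γ x) α hlt

lemma transOsc_zeroFun : ∀ (β : Ordinal.{0}) (x : X),
    transOsc (fun _ => (0:ℝ)) β x = 0 := by
  intro β
  induction β using Ordinal.induction with
  | h β IH =>
    rcases Ordinal.zero_or_succ_or_isSuccLimit β with rfl | ⟨γ, rfl⟩ | hlim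
    · intro x; rw [transOsc_zero]
    · intro x
      rw [transOsc_succ]
      refine le_antisymm (uscEnv_le_const (fun y => ?_) x) zero_le
      refine Filter.limsup_le_of_le (by isBoundedDefault) (Filter.Eventually.of_forall fun z => ?_)
      simp [IH γ (Order.lt_succ γ) z]
    · intro x
      rw [transOsc_limit _ hlim]
      refine le_antisymm (uscEnv_le_const (fun y => ?_) x) zero_le
      exact iSup₂_le fun γ hγ => le_of_eq (IH γ hγ y)

lemma transOsc_add_le (f g : X → ℝ) : ∀ (β : Ordinal.{0}) (x : X),
    transOsc (fun y => f y + g y) β x ≤ transOsc f β x + transOsc g β x := by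
  intro β
  induction β using Ordinal.induction with
  | h β IH =>
    rcases Ordinal.zero_or_succ_or_isSuccLimit β with rfl | ⟨γ, rfl⟩ | hlim
    · intro x; rw [transOsc_zero]; exact zero_le
    · intro x
      rw [transOsc_succ, transOsc_succ, transOsc_succ]
      have hpt : ∀ y : X,
          Filter.limsup (fun z => ENNReal.ofReal |(fun y => f y + g y) z - (fun y => f y + g y) y| +
            transOsc (fun y => f y + g y) γ z) (𝓝 y) ≤
          (Filter.limsup (fun z => ENNReal.ofReal |f z - f y| + transOsc f γ z) (𝓝 y)) +
          (Filter.limsup (fun z => ENNReal.ofReal |g z - g y| + transOsc g γ z) (𝓝 y)) := by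
        intro y
        refine le_trans (Filter.limsup_le_limsup (Filter.Eventually.of_forall fun z => ?_))
          (myLimsupAddLe (𝓝 y) _ _)
        show ENNReal.ofReal |(f z + g z) - (f y + g y)| + transOsc (fun y => f y + g y) γ z ≤
          (ENNReal.ofReal |f z - f y| + transOsc f γ z) +
          (ENNReal.ofReal |g z - g y| + transOsc g γ z)
        have habs : |(f z + g z) - (f y + g y)| ≤ |f z - f y| + |g z - g y| := by
          have : (f z + g z) - (f y + g y) = (f z - f y) + (g z - g y) := by ring
          rw [this]; exact abs_add_le _ _
        have h1 : ENNReal.ofReal |(f z + g z) - (f y + g y)| ≤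
            ENNReal.ofReal |f z - f y| + ENNReal.ofReal |g z - g y| := by
          refine le_trans (ENNReal.ofReal_le_ofReal habs) ?_
          rw [ENNReal.ofReal_add (abs_nonneg _) (abs_nonneg _)]
        calc ENNReal.ofReal |(f z + g z) - (f y + g y)| + transOsc (fun y => f y + g y) γ z
            ≤ (ENNReal.ofReal |f z - f y| + ENNReal.ofReal |g z - g y|) +
              (transOsc f γ z + transOsc g γ z) := add_le_add h1 (IH γ (Order.lt_succ γ) z)
          _ = _ := by ring
      exact le_trans (uscEnv_mono hpt x) (myLimsupAddLe (𝓝 x) _ _)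
    · intro x
      rw [transOsc_limit _ hlim, transOsc_limit f hlim, transOsc_limit g hlim]
      have hpt : ∀ y : X,
          (⨆ (γ : Ordinal) (_ : γ < β), transOsc (fun y => f y + g y) γ y) ≤
          (⨆ (γ : Ordinal) (_ : γ < β), transOsc f γ y) +
          (⨆ (γ : Ordinal) (_ : γ < β), transOsc g γ y) := by
        intro y
        refine iSup₂_le fun γ hγ => ?_
        refine le_trans (IH γ hγ y) (add_le_add ?_ ?_) <;>
          exact le_iSup₂ (f := fun γ (_ : γ < _) => transOsc _ γ y) γ hγ
      exact le_trans (uscEnv_mono hpt x) (myLimsupAddLe (𝓝 x) _ _)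

lemma transOsc_finsum_le {ι : Type*} (s : Finset ι) (ψ : ι → X → ℝ) (β : Ordinal.{0}) (x : X) :
    transOsc (fun y => ∑ j ∈ s, ψ j y) β x ≤ ∑ j ∈ s, transOsc (ψ j) β x := by
  classical
  induction s using Finset.cons_induction with
  | empty => simp [transOsc_zeroFun β x]
  | cons a s ha IH =>
    simp only [Finset.sum_cons]
    exact (transOsc_add_le (ψ a) (fun y => ∑ j ∈ s, ψ j y) β x).trans (add_le_add le_rfl IH)
end osc

lemma transOsc_congr {X : Type*} [TopologicalSpace X] {f g : X → ℝ} (h : ∀ y, f y = g y)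
    (β : Ordinal.{0}) (x : X) : transOsc f β x = transOsc g β x := by
  have : f = g := funext h
  rw [this]

lemma main_tail_bound {K : Type*} [TopologicalSpace K]
    (φ : K → ℝ) (φs : ℕ → K → ℝ)
    (hconv : TendstoUniformly (fun n x => ∑ j ∈ Finset.range n, φs j x) φ atTop) :
    ∀ α : Ordinal.{0}, (∑' j : ℕ, ⨆ x : K, transOsc (φs j) α x) ≠ ⊤ →
      ∀ (n : ℕ) (x : K), transOsc (fun y => φ y - ∑ j ∈ Finset.range n, φs j y) α x ≤
        ∑' i : ℕ, ⨆ x : K, transOsc (φs (i + n)) α x := by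
  intro α
  induction α using Ordinal.induction with
  | h α IH =>
    rcases Ordinal.zero_or_succ_or_isSuccLimit α with rfl | ⟨γ, rfl⟩ | hlim
    · intro _ n x
      rw [transOsc_zero]
      exact zero_le
    · intro hfin n x
      set N1 : ℕ → ℝ≥0∞ := fun j => ⨆ x : K, transOsc (φs j) (Order.succ γ) x with hN1
      set Nγ : ℕ → ℝ≥0∞ := fun j => ⨆ x : K, transOsc (φs j) γ x with hNγ
      have hmono : ∀ j, Nγ j ≤ N1 j := fun j =>
        iSup_mono fun x => transOsc_mono (φs j) (Order.succ γ) γ (Order.le_succ γ) x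
      have hfinγ : (∑' j : ℕ, Nγ j) ≠ ⊤ :=
        ne_top_of_le_ne_top hfin (ENNReal.tsum_le_tsum hmono)
      have IHγ := IH γ (Order.lt_succ γ) hfinγ
      have hTne : (∑' i : ℕ, N1 (i + n)) ≠ ⊤ := by
        refine ne_top_of_le_ne_top hfin ?_
        exact ENNReal.tsum_comp_le_tsum_of_injective (add_left_injective n) N1
      rw [transOsc_succ]
      refine uscEnv_le_const (fun x' => ?_) x
      refine ENNReal.le_of_forall_pos_le_add fun ε hε _ => ?_
      -- choose m
      have hev1 : ∀ᶠ m in atTop, ∀ y : K,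
          dist (φ y) (∑ j ∈ Finset.range m, φs j y) < (ε : ℝ) / 4 := by
        exact Metric.tendstoUniformly_iff.mp hconv ((ε : ℝ) / 4) (by positivity)
      have hev2 : ∀ᶠ m in atTop, (∑' i : ℕ, Nγ (i + m)) < (ε : ℝ≥0∞) / 2 := by
        refine (ENNReal.tendsto_sum_nat_add Nγ hfinγ).eventually_lt_const ?_
        exact ENNReal.half_pos (by exact_mod_cast hε.ne')
      obtain ⟨m, hm1, hm2, hmn⟩ :
          ∃ m, (∀ y : K, dist (φ y) (∑ j ∈ Finset.range m, φs j y) < (ε : ℝ) / 4) ∧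
            (∑' i : ℕ, Nγ (i + m)) < (ε : ℝ≥0∞) / 2 ∧ n ≤ m := by
        rcases ((hev1.and hev2).and (eventually_ge_atTop n)).exists with ⟨m, ⟨h1, h2⟩, h3⟩
        exact ⟨m, h1, h2, h3⟩
      set tl : ℕ → K → ℝ := fun k y => φ y - ∑ j ∈ Finset.range k, φs j y with htl
      -- decomposition of tail n
      have hdec : ∀ y : K, tl n y = (∑ j ∈ Finset.Ico n m, φs j y) + tl m y := by
        intro y
        simp only [htl]
        rw [Finset.sum_Ico_eq_sub _ hmn]
        ring
      -- pointwise bound for the function under limsup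
      have hpoint : ∀ y : K,
          ENNReal.ofReal |tl n y - tl n x'| + transOsc (tl n) γ y ≤
          (∑ j ∈ Finset.Ico n m, (ENNReal.ofReal |φs j y - φs j x'| + transOsc (φs j) γ y)) +
            (ENNReal.ofReal (|tl m y| + |tl m x'|) + ∑' i : ℕ, Nγ (i + m)) := by
        intro y
        have habs : |tl n y - tl n x'| ≤
            (∑ j ∈ Finset.Ico n m, |φs j y - φs j x'|) + (|tl m y| + |tl m x'|) := by
          rw [hdec y, hdec x']
          have : (∑ j ∈ Finset.Ico n m, φs j y) + tl m y -
              ((∑ j ∈ Finset.Ico n m, φs j x') + tl m x') =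
              (∑ j ∈ Finset.Ico n m, (φs j y - φs j x')) + (tl m y - tl m x') := by
            rw [Finset.sum_sub_distrib]; ring
          rw [this]
          refine (abs_add_le _ _).trans (add_le_add ?_ (abs_sub _ _))
          exact Finset.abs_sum_le_sum_abs _ _
        have h1 : ENNReal.ofReal |tl n y - tl n x'| ≤
            (∑ j ∈ Finset.Ico n m, ENNReal.ofReal |φs j y - φs j x'|) +
              ENNReal.ofReal (|tl m y| + |tl m x'|) := by
          refine (ENNReal.ofReal_le_ofReal habs).trans ?_
          rw [ENNReal.ofReal_add (Finset.sum_nonneg fun j _ => abs_nonneg _)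
            (by positivity), ENNReal.ofReal_sum_of_nonneg fun j _ => abs_nonneg _]
        have h2 : transOsc (tl n) γ y ≤
            (∑ j ∈ Finset.Ico n m, transOsc (φs j) γ y) + ∑' i : ℕ, Nγ (i + m) := by
          have hc := transOsc_congr hdec γ y
          rw [hc]
          refine (transOsc_add_le _ (tl m) γ y).trans (add_le_add ?_ ?_)
          · exact transOsc_finsum_le (Finset.Ico n m) φs γ y
          · exact IHγ m y
        calc ENNReal.ofReal |tl n y - tl n x'| + transOsc (tl n) γ y
            ≤ ((∑ j ∈ Finset.Ico n m, ENNReal.ofReal |φs j y - φs j x'|) +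
                ENNReal.ofReal (|tl m y| + |tl m x'|)) +
              ((∑ j ∈ Finset.Ico n m, transOsc (φs j) γ y) + ∑' i : ℕ, Nγ (i + m)) :=
              add_le_add h1 h2
          _ = (∑ j ∈ Finset.Ico n m, (ENNReal.ofReal |φs j y - φs j x'| + transOsc (φs j) γ y)) +
              (ENNReal.ofReal (|tl m y| + |tl m x'|) + ∑' i : ℕ, Nγ (i + m)) := by
              rw [Finset.sum_add_distrib]; ring
      -- now bound the limsup
      have hlim1 : Filter.limsup (fun y => ENNReal.ofReal |tl n y - tl n x'| +
          transOsc (tl n) γ y) (𝓝 x') ≤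
          (∑ j ∈ Finset.Ico n m, N1 j) + ((ε : ℝ≥0∞) / 2 + (ε : ℝ≥0∞) / 2) := by
        refine (Filter.limsup_le_limsup (Filter.Eventually.of_forall hpoint)).trans ?_
        refine (myLimsupAddLe (𝓝 x') _ _).trans (add_le_add ?_ ?_)
        · refine (myLimsupSumLe (𝓝 x') _ _).trans (Finset.sum_le_sum fun j _ => ?_)
          refine le_trans (le_uscEnv (fun x'' => Filter.limsup
            (fun y => ENNReal.ofReal |φs j y - φs j x''| + transOsc (φs j) γ y) (𝓝 x'')) x') ?_
          rw [← transOsc_succ]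
          exact le_iSup (fun x => transOsc (φs j) (Order.succ γ) x) x'
        · refine Filter.limsup_le_of_le (by isBoundedDefault)
            (Filter.Eventually.of_forall fun y => ?_)
          refine add_le_add ?_ hm2.le
          have hy := hm1 y
          have hx'' := hm1 x'
          rw [Real.dist_eq] at hy hx''
          have : |tl m y| + |tl m x'| ≤ (ε : ℝ) / 2 := by
            simp only [htl]
            nlinarith [hy, hx'']
          refine (ENNReal.ofReal_le_ofReal this).trans (le_of_eq ?_)
          rw [ENNReal.ofReal_div_of_pos (by norm_num), ENNReal.ofReal_coe_nnreal,
            ENNReal.ofReal_ofNat]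
      refine hlim1.trans ?_
      rw [ENNReal.add_halves]
      refine add_le_add ?_ le_rfl
      rw [Finset.sum_Ico_eq_sum_range]
      refine le_trans ?_ (ENNReal.sum_le_tsum (Finset.range (m - n)))
      refine le_of_eq (Finset.sum_congr rfl fun i _ => ?_)
      rw [add_comm]
    · intro hfin n x
      rw [transOsc_limit _ hlim]
      refine uscEnv_le_const (fun x' => ?_) x
      refine iSup₂_le fun γ hγ => ?_
      have hmono : ∀ j, (⨆ x : K, transOsc (φs j) γ x) ≤ ⨆ x : K, transOsc (φs j) α x :=
        fun j => iSup_mono fun x => transOsc_mono (φs j) α γ hγ.le x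
      have hfinγ : (∑' j : ℕ, ⨆ x : K, transOsc (φs j) γ x) ≠ ⊤ :=
        ne_top_of_le_ne_top hfin (ENNReal.tsum_le_tsum hmono)
      refine (IH γ hγ hfinγ n x').trans ?_
      exact ENNReal.tsum_le_tsum fun i => hmono (i + n)


theorem differences_semicontinuous_stmt_17
    {K : Type*} [TopologicalSpace K] [PolishSpace K]
    (α : Ordinal.{0}) (hα : α < Cardinal.ord.{0} (Cardinal.aleph 1))
    (φ : K → ℝ) (φs : ℕ → K → ℝ)
    (hconv : TendstoUniformly (fun n x => ∑ j ∈ Finset.range n, φs j x) φ atTop)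
    (hsum : (∑' j : ℕ, ⨆ x : K, transOsc (φs j) α x) ≠ ⊤) :
    Tendsto (fun n => ⨆ x : K,
        transOsc (fun y => φ y - ∑ j ∈ Finset.range n, φs j y) α x) atTop (𝓝 0) ∧
      (⨆ x : K, transOsc φ α x) ≤ ∑' j : ℕ, ⨆ x : K, transOsc (φs j) α x := by
  have S := main_tail_bound φ φs hconv α hsum
  constructor
  · refine tendsto_of_tendsto_of_tendsto_of_le_of_le tendsto_const_nhds
      (ENNReal.tendsto_sum_nat_add (fun j => ⨆ x : K, transOsc (φs j) α x) hsum)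
      (fun n => zero_le) (fun n => iSup_le fun x => S n x)
  · refine iSup_le fun x => ?_
    have h0 := S 0 x
    simp only [Finset.range_zero, Finset.sum_empty, sub_zero, add_zero] at h0
    exact h0
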